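/- arXiv:2502.08306 — 2 statements merged into one kernel-verified Lean document; each statement's English description precedes it below -/
import Mathlib

section
/- Let K be a triangle in ℝ² with vertices a₁,a₂,a₃, let b_K denote the cubic element bubble function on K, and let P_K = {q + p b_K : q, p ∈ ℙ₁(K)} (dimension 6). Let u₀ be a continuous function on K̄ with u₀ > 0 on K̄. If w = q + p b_K ∈ P_K satisfies w(aᵢ) = 0 for i=1,2,3 and ∫_σ u₀ ∂w/∂n_{K,σ} dS = 0 for each of the three edges σ of K, then w = 0. Consequently (K, P_K, Σ_K) with degrees of freedom Σ_K = {vertex values} ∪ {weighted edge normal-flux integrals with weight u₀} is a finite element. -/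
open scoped RealInnerProductSpace

/-!
Since `b_K` vanishes at the vertices, so does `q`, hence `q = 0` and `w = p b_K`. On the edge
opposite vertex `i` the factor `λ_i` of `b_K` vanishes, so the normal derivative of `w` there
is `∂_n λ_i · p · λ_{i+1} λ_{i+2}` with `∂_n λ_i < 0`. The flux condition thus says that the
affine function `p` integrates to zero on the edge against the weight `u₀ λ_{i+1} λ_{i+2}`,
which is positive inside the edge, so `p` has a root in the interior of each edge. Going
around the triangle, the vertex values of `p` alternate in sign along a cycle of odd length,
which forces `p = 0`.
-/

open Set AffineMap intervalIntegral

theorem AffineMap.hasFDerivAt_of_finiteDimensional {𝕜 E F : Type*} [NontriviallyNormedField 𝕜]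
    [CompleteSpace 𝕜] [NormedAddCommGroup E] [NormedSpace 𝕜 E] [FiniteDimensional 𝕜 E]
    [NormedAddCommGroup F] [NormedSpace 𝕜 F] (f : E →ᵃ[𝕜] F) (x : E) :
    HasFDerivAt f (LinearMap.toContinuousLinearMap f.linear) x :=
  ContinuousAffineMap.hasFDerivAt ⟨f, f.continuous_of_finiteDimensional⟩

theorem AffineMap.eq_zero_of_apply_eq_zero {ι k V P W : Type*} [Ring k] [AddCommGroup V]
    [Module k V] [AddTorsor V P] [AddCommGroup W] [Module k W] {a : ι → P}
    (hspan : affineSpan k (range a) = ⊤) (f : P →ᵃ[k] W) (hf : ∀ i, f (a i) = 0) : f = 0 :=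
  AffineMap.ext_on hspan <| by rintro - ⟨i, rfl⟩; exact hf i

theorem fderiv_mul_apply_of_left_eq_zero {𝕜 E : Type*} [NontriviallyNormedField 𝕜]
    [NormedAddCommGroup E] [NormedSpace 𝕜 E] {f g : E → 𝕜} {x : E}
    (hf : DifferentiableAt 𝕜 f x) (hg : DifferentiableAt 𝕜 g x) (hfx : f x = 0) (v : E) :
    fderiv 𝕜 (fun y => f y * g y) x v = g x * fderiv 𝕜 f x v := by
  simp [fderiv_fun_mul hf hg, hfx]

theorem IsPreconnected.forall_pos_or_forall_neg_of_ne_zero {X : Type*} [TopologicalSpace X]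
    {s : Set X} (hs : IsPreconnected s) {f : X → ℝ} (hf : ContinuousOn f s)
    (hne : ∀ x ∈ s, f x ≠ 0) : (∀ x ∈ s, 0 < f x) ∨ (∀ x ∈ s, f x < 0) := by
  by_contra! h
  obtain ⟨⟨x, hx, hfx⟩, ⟨y, hy, hfy⟩⟩ := h
  obtain ⟨z, hz, hfz⟩ := hs.intermediate_value hx hy hf ⟨hfx, hfy⟩
  exact hne z hz hfz

theorem exists_mem_Ioo_eq_zero_of_integral_mul_eq_zero {f g : ℝ → ℝ} {a b : ℝ} (hab : a < b)
    (hf : ContinuousOn f (Icc a b)) (hg : ContinuousOn g (Icc a b))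
    (hg_pos : ∀ t ∈ Ioo a b, 0 < g t) (h : ∫ t in a..b, f t * g t = 0) :
    ∃ t ∈ Ioo a b, f t = 0 := by
  by_contra! hne
  have hint : IntervalIntegrable (fun t => f t * g t) MeasureTheory.volume a b :=
    (hf.mul hg).intervalIntegrable_of_Icc hab.le
  rcases isPreconnected_Ioo.forall_pos_or_forall_neg_of_ne_zero
    (hf.mono Ioo_subset_Icc_self) hne with hpos | hneg
  · exact (intervalIntegral_pos_of_pos_on hint
      (fun t ht => mul_pos (hpos t ht) (hg_pos t ht)) hab).ne' h
  · have := intervalIntegral_pos_of_pos_on hint.neg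
      (fun t ht => neg_pos.2 (mul_neg_of_neg_of_pos (hneg t ht) (hg_pos t ht))) hab
    simp [integral_neg, h] at this

theorem eq_zero_of_cyclic_lineMap_eq_zero {v t : Fin 3 → ℝ} (ht : ∀ i, t i ∈ Ioo 0 1)
    (h : ∀ i, lineMap (v (i + 1)) (v (i + 2)) (t i) = 0) : v = 0 := by
  have h0 : (1 - t 0) * v 1 + t 0 * v 2 = 0 := by simpa [lineMap_apply_ring] using h 0
  have h1 : (1 - t 1) * v 2 + t 1 * v 0 = 0 := by simpa [lineMap_apply_ring] using h 1
  have h2 : (1 - t 2) * v 0 + t 2 * v 1 = 0 := by simpa [lineMap_apply_ring] using h 2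
  obtain ⟨ht0, ht0'⟩ := ht 0
  obtain ⟨ht1, ht1'⟩ := ht 1
  obtain ⟨ht2, ht2'⟩ := ht 2
  -- Going once around the triangle turns `v 1` into a negative multiple of itself.
  have hv1 : v 1 = 0 := by
    have hc : 0 < (1 - t 0) * (1 - t 1) * (1 - t 2) + t 0 * t 1 * t 2 := by
      have := sub_pos.2 ht0'; have := sub_pos.2 ht1'; have := sub_pos.2 ht2'
      positivity
    refine (mul_eq_zero.1 ?_).resolve_left hc.ne'
    linear_combination (1 - t 1) * (1 - t 2) * h0 - t 0 * (1 - t 2) * h1 + t 0 * t 1 * h2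
  have hv2 : v 2 = 0 := by simpa [hv1, ht0.ne'] using h0
  have hv0 : v 0 = 0 := by simpa [hv1, (sub_pos.2 ht2').ne'] using h2
  ext i
  fin_cases i <;> assumption

theorem AffineMap.eq_zero_of_exists_root_on_edges {V P : Type*} [AddCommGroup V]
    [Module ℝ V] [AddTorsor V P] {a : Fin 3 → P} (hspan : affineSpan ℝ (range a) = ⊤)
    (f : P →ᵃ[ℝ] ℝ)
    (h : ∀ i, ∃ t ∈ Ioo (0 : ℝ) 1, f (lineMap (a (i + 1)) (a (i + 2)) t) = 0) : f = 0 := by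
  choose t ht hroot using h
  have hv : (fun i => f (a i)) = 0 :=
    eq_zero_of_cyclic_lineMap_eq_zero ht fun i => by simpa [apply_lineMap] using hroot i
  exact f.eq_zero_of_apply_eq_zero hspan (congrFun hv)

theorem Fin.prod_univ_three_rotate {M : Type*} [CommMonoid M] (f : Fin 3 → M) (i : Fin 3) :
    ∏ j, f j = f i * (f (i + 1) * f (i + 2)) := by
  rw [← Fintype.prod_equiv (Equiv.addLeft i) (fun j => f (i + j)) f fun _ => rfl,
    Fin.prod_univ_three]
  simp [mul_assoc]

section Bubble

variable {E : Type*} [NormedAddCommGroup E] [NormedSpace ℝ E]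
  {a : Fin 3 → E} {lam : Fin 3 → E →ᵃ[ℝ] ℝ}

theorem barycentric_apply_lineMap (hlam : ∀ i j, lam i (a j) = if i = j then 1 else 0)
    (i j : Fin 3) (t : ℝ) :
    lam j (lineMap (a (i + 1)) (a (i + 2)) t) =
      (1 - t) * (if j = i + 1 then 1 else 0) + t * (if j = i + 2 then 1 else 0) := by
  rw [apply_lineMap, hlam, hlam, lineMap_apply_ring]

theorem fderiv_mul_bubble_apply_lineMap [FiniteDimensional ℝ E]
    (hlam : ∀ i j, lam i (a j) = if i = j then 1 else 0)
    (p : E →ᵃ[ℝ] ℝ) (i : Fin 3) (t : ℝ) (v : E) :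
    fderiv ℝ (fun x => p x * ∏ j, lam j x) (lineMap (a (i + 1)) (a (i + 2)) t) v =
      (lam i).linear v * (p (lineMap (a (i + 1)) (a (i + 2)) t) * ((1 - t) * t)) := by
  have hdiff : ∀ (f : E →ᵃ[ℝ] ℝ) x, DifferentiableAt ℝ f x :=
    fun f x => (f.hasFDerivAt_of_finiteDimensional x).differentiableAt
  have hrot : (fun x => p x * ∏ j, lam j x) =
      fun x => lam i x * (p x * (lam (i + 1) x * lam (i + 2) x)) := by
    funext x
    rw [Fin.prod_univ_three_rotate _ i]
    ring
  have hbary := barycentric_apply_lineMap hlam i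
  rw [hrot, fderiv_mul_apply_of_left_eq_zero (f := lam i)
    (g := fun x => p x * (lam (i + 1) x * lam (i + 2) x)) (hdiff _ _)
    ((hdiff p _).mul ((hdiff _ _).mul (hdiff _ _))) (by simp [hbary]),
    ((lam i).hasFDerivAt_of_finiteDimensional _).fderiv]
  simp only [hbary, apply_lineMap, LinearMap.coe_toContinuousLinearMap', add_right_inj,
    Fin.reduceEq, reduceIte, mul_one, mul_zero, add_zero, zero_add]
  ring

theorem exists_root_of_integral_mul_fderiv_mul_bubble_eq_zero [FiniteDimensional ℝ E]
    (hlam : ∀ i j, lam i (a j) = if i = j then 1 else 0) (p : E →ᵃ[ℝ] ℝ) (i : Fin 3)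
    {v : E} (hv : (lam i).linear v ≠ 0) {u : E → ℝ}
    (hu_cont : ContinuousOn u (segment ℝ (a (i + 1)) (a (i + 2))))
    (hu_pos : ∀ x ∈ segment ℝ (a (i + 1)) (a (i + 2)), 0 < u x)
    (hflux : ∫ t in (0 : ℝ)..1, u (lineMap (a (i + 1)) (a (i + 2)) t) *
      fderiv ℝ (fun x => p x * ∏ j, lam j x) (lineMap (a (i + 1)) (a (i + 2)) t) v = 0) :
    ∃ t ∈ Ioo (0 : ℝ) 1, p (lineMap (a (i + 1)) (a (i + 2)) t) = 0 := by
  have hedge : MapsTo (lineMap (a (i + 1)) (a (i + 2)) : ℝ → E) (Icc 0 1)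
      (segment ℝ (a (i + 1)) (a (i + 2))) := by
    rw [segment_eq_image_lineMap]
    exact mapsTo_image _ _
  refine exists_mem_Ioo_eq_zero_of_integral_mul_eq_zero
    (g := fun t => u (lineMap (a (i + 1)) (a (i + 2)) t) * ((1 - t) * t))
    zero_lt_one (p.continuous_of_finiteDimensional.comp lineMap_continuous).continuousOn
    ((hu_cont.comp lineMap_continuous.continuousOn hedge).mul (by fun_prop))
    (fun t ht => mul_pos (hu_pos _ (hedge (Ioo_subset_Icc_self ht)))
      (mul_pos (sub_pos.2 ht.2) ht.1)) ?_
  simp_rw [fderiv_mul_bubble_apply_lineMap hlam] at hflux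
  rw [← mul_eq_zero_iff_left hv, ← integral_const_mul]
  exact (integral_congr fun t _ => by ring).trans hflux

end Bubble

theorem stmt_2_general
    (a : Fin 3 → EuclideanSpace ℝ (Fin 2))
    (ha : AffineIndependent ℝ a)
    (lam : Fin 3 → (EuclideanSpace ℝ (Fin 2) →ᵃ[ℝ] ℝ))
    (hlam : ∀ i j, lam i (a j) = if i = j then 1 else 0)
    (bK : EuclideanSpace ℝ (Fin 2) → ℝ)
    (hbK : ∀ x, bK x = ∏ i, lam i x)
    (K : Set (EuclideanSpace ℝ (Fin 2)))
    (hKdef : K = convexHull ℝ (Set.range a))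
    -- outer unit normals of the edges (edge `i` is opposite vertex `i`)
    (n : Fin 3 → EuclideanSpace ℝ (Fin 2))
    (hn_out : ∀ i, (lam i).linear (n i) < 0)
    -- positive continuous weight
    (u0 : EuclideanSpace ℝ (Fin 2) → ℝ)
    (hu0cont : ContinuousOn u0 K)
    (hu0pos : ∀ x ∈ K, 0 < u0 x)
    -- element of `P_K` with vanishing degrees of freedom
    (q p : EuclideanSpace ℝ (Fin 2) →ᵃ[ℝ] ℝ)
    (w : EuclideanSpace ℝ (Fin 2) → ℝ)
    (hw : ∀ x, w x = q x + p x * bK x)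
    (hvertex : ∀ i, w (a i) = 0)
    (hflux : ∀ i, ∫ t in (0:ℝ)..1,
        u0 (a (i + 1) + t • (a (i + 2) - a (i + 1)))
          * fderiv ℝ w (a (i + 1) + t • (a (i + 2) - a (i + 1))) (n i) = 0) :
    ∀ x, w x = 0 := by
  have hspan : affineSpan ℝ (range a) = ⊤ :=
    ha.affineSpan_eq_top_iff_card_eq_finrank_add_one.2 (by simp)
  have hbK_vertex (j : Fin 3) : bK (a j) = 0 := by
    rw [hbK]
    exact Finset.prod_eq_zero (Finset.mem_univ (j + 1)) (by simp [hlam])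
  have hq : q = 0 := q.eq_zero_of_apply_eq_zero hspan fun j => by
    simpa [hw, hbK_vertex] using hvertex j
  have hw' : w = fun x => p x * ∏ j, lam j x := funext fun x => by simp [hw, hq, hbK]
  have hp : p = 0 := p.eq_zero_of_exists_root_on_edges hspan fun i => by
    have hseg : segment ℝ (a (i + 1)) (a (i + 2)) ⊆ K :=
      hKdef ▸ (convex_convexHull ℝ _).segment_subset
        (subset_convexHull ℝ _ (mem_range_self _)) (subset_convexHull ℝ _ (mem_range_self _))
    refine exists_root_of_integral_mul_fderiv_mul_bubble_eq_zero hlam p i (hn_out i).ne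
      (hu0cont.mono hseg) (fun x hx => hu0pos x (hseg hx)) ?_
    have hedge_eq (t : ℝ) :
        a (i + 1) + t • (a (i + 2) - a (i + 1)) = lineMap (a (i + 1)) (a (i + 2)) t := by
      rw [lineMap_apply_module', add_comm]
    simpa only [hedge_eq, hw'] using hflux i
  intro x
  simp [hw', hp]

/-- Unisolvence of the weighted Morley-type element: on a (nondegenerate) triangle `K` with
vertices `a 0, a 1, a 2`, barycentric coordinates `lam i`, cubic bubble `b_K = ∏ lam i`, and
outer unit normals `n i` on the edges, if `w = q + p·b_K` (with `q, p` affine) vanishes at the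
three vertices and the weighted normal-flux integrals `∫_σ u₀ ∂w/∂n dS` vanish on all three
edges (with a weight `u₀` continuous and positive on `K̄`), then `w = 0`.  Consequently
`(K, P_K, Σ_K)` is a finite element. -/
theorem stmt_2
    (a : Fin 3 → EuclideanSpace ℝ (Fin 2))
    (ha : AffineIndependent ℝ a)
    (lam : Fin 3 → (EuclideanSpace ℝ (Fin 2) →ᵃ[ℝ] ℝ))
    (hlam : ∀ i j, lam i (a j) = if i = j then 1 else 0)
    (hsum : ∀ x, ∑ i, lam i x = 1)
    (bK : EuclideanSpace ℝ (Fin 2) → ℝ)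
    (hbK : ∀ x, bK x = ∏ i, lam i x)
    (K : Set (EuclideanSpace ℝ (Fin 2)))
    (hKdef : K = convexHull ℝ (Set.range a))
    -- outer unit normals of the edges (edge `i` is opposite vertex `i`)
    (n : Fin 3 → EuclideanSpace ℝ (Fin 2))
    (hn_unit : ∀ i, ‖n i‖ = 1)
    (hn_orth : ∀ i, ⟪n i, a (i + 2) - a (i + 1)⟫ = 0)
    (hn_out : ∀ i, (lam i).linear (n i) < 0)
    -- positive continuous weight
    (u0 : EuclideanSpace ℝ (Fin 2) → ℝ)
    (hu0cont : ContinuousOn u0 K)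
    (hu0pos : ∀ x ∈ K, 0 < u0 x)
    -- element of `P_K` with vanishing degrees of freedom
    (q p : EuclideanSpace ℝ (Fin 2) →ᵃ[ℝ] ℝ)
    (w : EuclideanSpace ℝ (Fin 2) → ℝ)
    (hw : ∀ x, w x = q x + p x * bK x)
    (hvertex : ∀ i, w (a i) = 0)
    (hflux : ∀ i, ∫ t in (0:ℝ)..1,
        u0 (a (i + 1) + t • (a (i + 2) - a (i + 1)))
          * fderiv ℝ w (a (i + 1) + t • (a (i + 2) - a (i + 1))) (n i) = 0) :
    ∀ x, w x = 0 :=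
  stmt_2_general a ha lam hlam bK hbK K hKdef n hn_out u0 hu0cont hu0pos q p w hw hvertex hflux
end

section
/- Decoupling of the solvent equation: if (v₁,…,v_n) are sufficiently smooth solutions of ∂_t v_i = div(v₀∇v_i - v_i∇v₀ + v₀ v_i β z ∇Ψ) for i=1,…,n with v₀ = 1 - Σ_{i=1}^n v_i, then v₀ satisfies ∂_t v₀ = div(∇v₀ - v₀(1-v₀) z β ∇Ψ). In particular, when z = 0, v₀ solves the heat equation ∂_t v₀ = Δv₀. -/
/-!
Summing the `n` solute equations, the left-hand sides add up to `-∂ₜ v₀` since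
`∑ vᵢ = 1 - v₀`. On the right, divergence is linear, and in the summed flux the cross-diffusion
terms collapse: `∑ (v₀ ∇vᵢ - vᵢ ∇v₀) = -v₀ ∇v₀ - (1 - v₀) ∇v₀ = -∇v₀` because `∑ ∇vᵢ = -∇v₀`,
while the drift terms add up to `β z v₀ (1 - v₀) ∇Ψ`.
-/

open scoped RealInnerProductSpace

/-- Divergence of a vector field on `ℝ^d`. -/
noncomputable def vdiv {d : ℕ}
    (F : EuclideanSpace ℝ (Fin d) → EuclideanSpace ℝ (Fin d))
    (x : EuclideanSpace ℝ (Fin d)) : ℝ :=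
  ∑ i, ⟪fderiv ℝ F x (EuclideanSpace.single i 1), EuclideanSpace.single i 1⟫

section Gradient

variable {E : Type*} [NormedAddCommGroup E] [InnerProductSpace ℝ E] [CompleteSpace E]

theorem ContDiff.differentiable_gradient {f : E → ℝ} (hf : ContDiff ℝ 2 f) :
    Differentiable ℝ (gradient f) :=
  (InnerProductSpace.toDual ℝ E).symm.differentiable.comp
    ((hf.fderiv_right (m := 1) (by norm_num)).differentiable one_ne_zero)

theorem gradient_const_sub_sum {ι : Type*} (s : Finset ι) {f : ι → E → ℝ} (c : ℝ) {x : E}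
    (hf : ∀ i ∈ s, DifferentiableAt ℝ (f i) x) :
    gradient (fun y => c - ∑ i ∈ s, f i y) x = -∑ i ∈ s, gradient (f i) x := by
  simp only [gradient, fderiv_const_sub, fderiv_fun_sum hf, map_neg, map_sum]

end Gradient

section Divergence

variable {d : ℕ} {x : EuclideanSpace ℝ (Fin d)}

theorem vdiv_neg (F : EuclideanSpace ℝ (Fin d) → EuclideanSpace ℝ (Fin d)) :
    vdiv (fun y => -F y) x = -vdiv F x := by
  simp only [vdiv, fderiv_fun_neg, neg_apply, inner_neg_left,
    Finset.sum_neg_distrib]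

theorem vdiv_sum {ι : Type*} (s : Finset ι)
    (F : ι → EuclideanSpace ℝ (Fin d) → EuclideanSpace ℝ (Fin d))
    (hF : ∀ i ∈ s, DifferentiableAt ℝ (F i) x) :
    vdiv (fun y => ∑ i ∈ s, F i y) x = ∑ i ∈ s, vdiv (F i) x := by
  simp only [vdiv, fderiv_fun_sum hF, sum_apply, sum_inner]
  exact Finset.sum_comm

end Divergence

theorem neg_sum_flux_eq {E ι : Type*} [AddCommGroup E] [Module ℝ E] (s : Finset ι)
    {a : ι → ℝ} {g : ι → E} {a₀ β z : ℝ} {g₀ gΨ : E}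
    (ha : a₀ = 1 - ∑ i ∈ s, a i) (hg : g₀ = -∑ i ∈ s, g i) :
    -∑ i ∈ s, (a₀ • g i - a i • g₀ + (β * z * (a₀ * a i)) • gΨ)
      = g₀ - (z * β * (a₀ * (1 - a₀))) • gΨ := by
  have hsum_a : ∑ i ∈ s, a i = 1 - a₀ := by linarith
  have hsum_g : ∑ i ∈ s, g i = -g₀ := by rw [hg, neg_neg]
  simp only [Finset.sum_add_distrib, Finset.sum_sub_distrib, ← Finset.smul_sum,
    ← Finset.sum_smul, ← Finset.mul_sum, hsum_a, hsum_g]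
  match_scalars <;> ring

/-- Decoupling of the solvent equation: if `v₁,…,v_n` are sufficiently smooth solutions of
`∂ₜ v_i = div(v₀∇v_i - v_i∇v₀ + β z v₀ v_i ∇Ψ)` with `v₀ = 1 - ∑ v_i`, then
`∂ₜ v₀ = div(∇v₀ - z β v₀(1-v₀)∇Ψ)`; in particular for `z = 0`, `∂ₜ v₀ = Δ v₀`. -/
theorem stmt_7 (d n : ℕ)
    (v : Fin (n + 1) → ℝ → EuclideanSpace ℝ (Fin d) → ℝ)
    (Ψ : ℝ → EuclideanSpace ℝ (Fin d) → ℝ)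
    (β z : ℝ)
    (hsmooth_space : ∀ i t, ContDiff ℝ 2 (v i t))
    (hΨsmooth : ∀ t, ContDiff ℝ 2 (Ψ t))
    (hsmooth_time : ∀ i x, Differentiable ℝ (fun s => v i s x))
    (hv0 : ∀ t x, v 0 t x = 1 - ∑ i : Fin n, v i.succ t x)
    (heq : ∀ (i : Fin n) (t : ℝ) (x : EuclideanSpace ℝ (Fin d)),
      deriv (fun s => v i.succ s x) t
        = vdiv (fun y => v 0 t y • gradient (v i.succ t) y
            - v i.succ t y • gradient (v 0 t) y
            + (β * z * (v 0 t y * v i.succ t y)) • gradient (Ψ t) y) x) :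
    (∀ t x, deriv (fun s => v 0 s x) t
        = vdiv (fun y => gradient (v 0 t) y
            - (z * β * (v 0 t y * (1 - v 0 t y))) • gradient (Ψ t) y) x)
    ∧ (z = 0 → ∀ t x, deriv (fun s => v 0 s x) t
        = vdiv (fun y => gradient (v 0 t) y) x) := by
  have main : ∀ t x, deriv (fun s => v 0 s x) t
      = vdiv (fun y => gradient (v 0 t) y
          - (z * β * (v 0 t y * (1 - v 0 t y))) • gradient (Ψ t) y) x := by
    intro t x
    have hv : ∀ i, Differentiable ℝ (v i t) :=
      fun i => (hsmooth_space i t).differentiable (by norm_num)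
    have hgv : ∀ i, Differentiable ℝ (gradient (v i t)) :=
      fun i => (hsmooth_space i t).differentiable_gradient
    have hgΨ : Differentiable ℝ (gradient (Ψ t)) := (hΨsmooth t).differentiable_gradient
    have hdt : deriv (fun s => v 0 s x) t = -∑ i : Fin n, deriv (fun s => v i.succ s x) t := by
      simp only [hv0 _ x]
      rw [deriv_const_sub, deriv_fun_sum fun i _ => (hsmooth_time i.succ x).differentiableAt]
    have hgrad : ∀ y, gradient (v 0 t) y = -∑ i : Fin n, gradient (v i.succ t) y := fun y => by
      rw [show v 0 t = _ from funext (hv0 t)]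
      exact gradient_const_sub_sum _ 1 fun i _ => (hv i.succ).differentiableAt
    simp only [← neg_sum_flux_eq Finset.univ (hv0 t _) (hgrad _)]
    rw [hdt, vdiv_neg, vdiv_sum _ _ fun i _ => by fun_prop]
    simp only [heq]
  exact ⟨main, fun hz t x => by simpa [hz] using main t x⟩
end
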